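/- arXiv:1111.0537 — 2 statements merged into one kernel-verified Lean document; each statement's English description precedes it below -/
import Mathlib

section
/- Lemma (truncation approximation, finite sums). Let X_1, …, X_n be independent real random variables, let x > 0, and let 0 < η < 1 and ε > 0 satisfy 1 − η > ε. Then |P(S_n ≥ x) − P(S_n^{(εx)} ≥ x) − Σ_{j=1}^n P(X_j ≥ (1−η)x)| ≤ 4 (Σ_{j=1}^n P(X_j ≥ εx))² + 3 Σ_{j=1}^n P(X_j ≥ εx) · P(|S_n(j)| > ηx) + Σ_{j=1}^n P((1−η)x ≤ X_j < (1+η)x). -/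
/-!
Let `C j` be the event `X j ≥ εx`, and split `{S n ≥ x}` and its truncated counterpart according
to whether some `C j` occurs. Off `⋃ j, C j` no variable is truncated, so the two events agree
there. On `C j` the truncated sum omits `X j`, so it can only reach `x` if `|S n(j)| > ηx`; and up
to the events `|S n(j)| > ηx` and `(1-η)x ≤ X j < (1+η)x`, the event `{S n ≥ x} ∩ C j` is
`{X j ≥ (1-η)x}`. Replacing `{S n ≥ x} ∩ ⋃ j, C j` by the sum over `j` costs the overlaps
`C j ∩ C k`, and independence turns all the intersections into products.
-/

open MeasureTheory ProbabilityTheory Finset Function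

theorem ProbabilityTheory.IndepFun.measureReal_inter_preimage_eq_mul {Ω β β' : Type*}
    [MeasurableSpace Ω] [MeasurableSpace β] [MeasurableSpace β'] {μ : Measure Ω}
    {f : Ω → β} {g : Ω → β'} (h : IndepFun f g μ) {s : Set β} {t : Set β'}
    (hs : MeasurableSet s) (ht : MeasurableSet t) :
    μ.real (f ⁻¹' s ∩ g ⁻¹' t) = μ.real (f ⁻¹' s) * μ.real (g ⁻¹' t) := by
  simp only [measureReal_def, h.measure_inter_preimage_eq_mul s t hs ht, ENNReal.toReal_mul]

theorem ProbabilityTheory.iIndepFun.measureReal_preimage_inter_sum_preimage_eq_mul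
    {Ω ι β : Type*} [MeasurableSpace Ω] [MeasurableSpace β] [AddCommMonoid β] [MeasurableAdd₂ β]
    {μ : Measure Ω} {X : ι → Ω → β} (hX : iIndepFun X μ) (hmeas : ∀ i, Measurable (X i))
    {s : Finset ι} {j : ι} (hj : j ∉ s) {t u : Set β} (ht : MeasurableSet t)
    (hu : MeasurableSet u) :
    μ.real (X j ⁻¹' t ∩ (fun ω => ∑ i ∈ s, X i ω) ⁻¹' u)
      = μ.real (X j ⁻¹' t) * μ.real ((fun ω => ∑ i ∈ s, X i ω) ⁻¹' u) := by
  have hind := (hX.indepFun_finsetSum_of_notMem hmeas hj).symm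
  rw [sum_fn] at hind
  exact hind.measureReal_inter_preimage_eq_mul ht hu

section Events

variable {Ω ι : Type*} [MeasurableSpace Ω] (μ : Measure Ω) [Fintype ι] [DecidableEq ι]

theorem sum_sum_erase_measureReal_inter_le_sq (C : ι → Set Ω)
    (hC : Pairwise fun j k => μ.real (C j ∩ C k) ≤ μ.real (C j) * μ.real (C k)) :
    ∑ j, ∑ k ∈ univ.erase j, μ.real (C j ∩ C k) ≤ (∑ j, μ.real (C j)) ^ 2 := by
  calc ∑ j, ∑ k ∈ univ.erase j, μ.real (C j ∩ C k)
      ≤ ∑ j, ∑ k, μ.real (C j) * μ.real (C k) := by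
        gcongr with j
        exact (sum_le_sum fun k hk => hC (mem_erase.1 hk).1.symm).trans
          (sum_le_sum_of_subset_of_nonneg (erase_subset _ _) fun _ _ _ => by positivity)
    _ = (∑ j, μ.real (C j)) ^ 2 := by rw [sq, sum_mul_sum]

variable [IsFiniteMeasure μ]

theorem sum_measureReal_inter_le_inter_iUnion_add {A : Set Ω} {C : ι → Set Ω}
    (hA : MeasurableSet A) (hC : ∀ j, MeasurableSet (C j)) :
    ∑ j, μ.real (A ∩ C j)
      ≤ μ.real (A ∩ ⋃ j, C j) + ∑ j, ∑ k ∈ univ.erase j, μ.real (C j ∩ C k) := by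
  let E : ι → Set Ω := fun j => (A ∩ C j) \ ⋃ k ∈ univ.erase j, C k
  have hE_disjoint : Pairwise (Disjoint on E) := fun j k hjk =>
    Set.disjoint_left.2 fun _ hj hk =>
      hj.2 (Set.mem_biUnion (mem_erase.2 ⟨hjk.symm, mem_univ k⟩) hk.1.2)
  have hE_meas : ∀ j, MeasurableSet (E j) := fun j =>
    (hA.inter (hC j)).diff (.biUnion (Set.to_countable _) fun k _ => hC k)
  have hE_le : ∀ j, μ.real (A ∩ C j)
      ≤ μ.real (E j) + ∑ k ∈ univ.erase j, μ.real (C j ∩ C k) := by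
    intro j
    have hcover : A ∩ C j ⊆ E j ∪ ⋃ k ∈ univ.erase j, C j ∩ C k := by
      intro ω hω
      by_cases hk : ω ∈ ⋃ k ∈ univ.erase j, C k
      · obtain ⟨k, hk, hωk⟩ := Set.mem_iUnion₂.1 hk
        exact Or.inr (Set.mem_biUnion hk ⟨hω.2, hωk⟩)
      · exact Or.inl ⟨hω, hk⟩
    exact (measureReal_mono hcover).trans <| (measureReal_union_le _ _).trans <| by
      gcongr; exact measureReal_biUnion_finset_le _ _
  have hE_sum : ∑ j, μ.real (E j) ≤ μ.real (A ∩ ⋃ j, C j) := by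
    rw [← measureReal_iUnion_fintype hE_disjoint hE_meas]
    exact measureReal_mono <| Set.iUnion_subset fun j _ hω =>
      ⟨hω.1.1, Set.mem_iUnion.2 ⟨j, hω.1.2⟩⟩
  calc ∑ j, μ.real (A ∩ C j)
      ≤ ∑ j, (μ.real (E j) + ∑ k ∈ univ.erase j, μ.real (C j ∩ C k)) :=
        sum_le_sum fun j _ => hE_le j
    _ ≤ _ := by rw [sum_add_distrib]; gcongr

theorem abs_measureReal_inter_sub_le {A C D G R : Set Ω} (hAD : A ⊆ D ∪ R) (hDC : D ⊆ C)
    (hDA : D \ A ⊆ G ∪ R) :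
    |μ.real (A ∩ C) - μ.real D| ≤ μ.real G + μ.real (C ∩ R) := by
  have hA_le : μ.real (A ∩ C) ≤ μ.real D + μ.real (C ∩ R) := by
    refine (measureReal_mono fun ω hω => ?_).trans (measureReal_union_le _ _)
    exact (hAD hω.1).imp id fun hR => ⟨hω.2, hR⟩
  have hD_le : μ.real D ≤ μ.real (A ∩ C) + (μ.real G + μ.real (C ∩ R)) := by
    refine (measureReal_mono (s₂ := A ∩ C ∪ (G ∪ C ∩ R)) fun ω hω => ?_).trans <|
      (measureReal_union_le _ _).trans <| by gcongr; exact measureReal_union_le _ _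
    by_cases hA : ω ∈ A
    · exact Or.inl ⟨hA, hDC hω⟩
    · exact Or.inr <| (hDA ⟨hω, hA⟩).imp id fun hR => ⟨hDC hω, hR⟩
  rw [abs_le]
  constructor <;> linarith [measureReal_nonneg (μ := μ) (s := G)]

theorem abs_measureReal_sub_sub_sum_le {A B : Set Ω} {C D G R : ι → Set Ω}
    (hA : MeasurableSet A) (hC : ∀ j, MeasurableSet (C j))
    (hAB : A \ ⋃ j, C j = B \ ⋃ j, C j) (hBR : ∀ j, B ∩ C j ⊆ R j)
    (hAD : ∀ j, A ⊆ D j ∪ R j) (hDC : ∀ j, D j ⊆ C j) (hDA : ∀ j, D j \ A ⊆ G j ∪ R j) :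
    |μ.real A - μ.real B - ∑ j, μ.real (D j)|
      ≤ ∑ j, ∑ k ∈ univ.erase j, μ.real (C j ∩ C k) + 2 * ∑ j, μ.real (C j ∩ R j)
        + ∑ j, μ.real (G j) := by
  have hU : MeasurableSet (⋃ j, C j) := .iUnion hC
  have hA_split := measureReal_inter_add_sdiff (μ := μ) (s := A) hU
  have hB_split := measureReal_inter_add_sdiff (μ := μ) (s := B) hU
  have hB_le : μ.real (B ∩ ⋃ j, C j) ≤ ∑ j, μ.real (C j ∩ R j) := by
    refine (measureReal_mono ?_).trans (measureReal_iUnion_fintype_le _)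
    rw [Set.inter_iUnion]
    exact Set.iUnion_mono fun j _ hω => ⟨hω.2, hBR j hω⟩
  have hA_le : μ.real (A ∩ ⋃ j, C j) ≤ ∑ j, μ.real (A ∩ C j) := by
    rw [Set.inter_iUnion]
    exact measureReal_iUnion_fintype_le _
  have hA_ge := sum_measureReal_inter_le_inter_iUnion_add μ hA hC
  have hD : |∑ j, μ.real (A ∩ C j) - ∑ j, μ.real (D j)|
      ≤ ∑ j, μ.real (G j) + ∑ j, μ.real (C j ∩ R j) := by
    rw [← sum_sub_distrib, ← sum_add_distrib]
    exact (abs_sum_le_sum_abs _ _).trans <|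
      sum_le_sum fun j _ => abs_measureReal_inter_sub_le μ (hAD j) (hDC j) (hDA j)
  rw [hAB] at hA_split
  rw [abs_le] at hD ⊢
  constructor <;> linarith [measureReal_nonneg (μ := μ) (s := B ∩ ⋃ j, C j)]

end Events

section RealSums

variable {ι : Type*} [Fintype ι] [DecidableEq ι] {y : ι → ℝ} {x η c : ℝ} {j : ι}

theorem lt_abs_sum_erase_of_le_sum (hx : x ≤ ∑ i, y i) (hj : y j < (1 - η) * x) :
    η * x < |∑ i ∈ univ.erase j, y i| := by
  rw [← add_sum_erase univ y (mem_univ j)] at hx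
  exact lt_of_lt_of_le (by linarith) (le_abs_self _)

theorem lt_abs_sum_erase_of_sum_lt (hx : ∑ i, y i < x) (hj : (1 + η) * x ≤ y j) :
    η * x < |∑ i ∈ univ.erase j, y i| := by
  rw [← add_sum_erase univ y (mem_univ j)] at hx
  exact lt_of_lt_of_le (by linarith) (neg_le_abs _)

theorem lt_abs_sum_erase_of_le_sum_ite (hc : 0 ≤ c) (hη : η < 1) (hx0 : 0 < x) (hj : c ≤ y j)
    (hx : x ≤ ∑ i, if y i < c then y i else 0) :
    η * x < |∑ i ∈ univ.erase j, y i| := by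
  have hle : ∑ i, (if y i < c then y i else 0) ≤ ∑ i ∈ univ.erase j, y i := by
    rw [← add_sum_erase univ _ (mem_univ j), if_neg (not_lt.2 hj), zero_add]
    gcongr with i
    split_ifs with h
    · exact le_rfl
    · linarith [not_lt.1 h]
  exact ((mul_lt_of_lt_one_left hx0 hη).trans_le (hx.trans hle)).trans_le (le_abs_self _)

end RealSums

theorem truncation_approximation_finite_general
    {Ω : Type*} [MeasurableSpace Ω] (P : Measure Ω) [IsProbabilityMeasure P]
    (n : ℕ) (X : Fin n → Ω → ℝ)
    (hmeas : ∀ i, Measurable (X i))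
    (hindep : iIndepFun X P)
    (x η ε : ℝ) (hx : 0 < x)
    (hη1 : η < 1) (hε : 0 < ε) (hηε : ε < 1 - η) :
    |(P {ω | x ≤ ∑ i, X i ω}).toReal
      - (P {ω | x ≤ ∑ i, (if X i ω < ε * x then X i ω else 0)}).toReal
      - ∑ j, (P {ω | (1 - η) * x ≤ X j ω}).toReal|
    ≤ 4 * (∑ j, (P {ω | ε * x ≤ X j ω}).toReal) ^ 2
      + 3 * ∑ j, (P {ω | ε * x ≤ X j ω}).toReal
          * (P {ω | η * x < |∑ i ∈ Finset.univ.erase j, X i ω|}).toReal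
      + ∑ j, (P {ω | (1 - η) * x ≤ X j ω ∧ X j ω < (1 + η) * x}).toReal := by
  simp only [← measureReal_def]
  set C : Fin n → Set Ω := fun j => {ω | ε * x ≤ X j ω}
  set R : Fin n → Set Ω := fun j => {ω | η * x < |∑ i ∈ univ.erase j, X i ω|}
  have hCC : Pairwise fun j k => P.real (C j ∩ C k) ≤ P.real (C j) * P.real (C k) :=
    fun j k hjk => ((hindep.indepFun hjk).measureReal_inter_preimage_eq_mul
      measurableSet_Ici measurableSet_Ici).le
  have hCR : ∀ j, P.real (C j ∩ R j) = P.real (C j) * P.real (R j) := fun j =>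
    hindep.measureReal_preimage_inter_sum_preimage_eq_mul hmeas (notMem_erase j univ)
      measurableSet_Ici (measurableSet_lt measurable_const measurable_abs)
  have hAB : {ω | x ≤ ∑ i, X i ω} \ ⋃ j, C j
      = {ω | x ≤ ∑ i, (if X i ω < ε * x then X i ω else 0)} \ ⋃ j, C j := by
    ext ω
    simp only [C, Set.mem_sdiff, Set.mem_iUnion, Set.mem_ofPred_eq, not_exists, not_le]
    refine and_congr_left fun h => ?_
    rw [sum_congr rfl fun i _ => if_pos (h i)]
  have key := abs_measureReal_sub_sub_sum_le P (A := {ω | x ≤ ∑ i, X i ω})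
    (B := {ω | x ≤ ∑ i, (if X i ω < ε * x then X i ω else 0)}) (C := C)
    (D := fun j => {ω | (1 - η) * x ≤ X j ω})
    (G := fun j => {ω | (1 - η) * x ≤ X j ω ∧ X j ω < (1 + η) * x}) (R := R)
    (measurableSet_le measurable_const (Finset.measurable_sum univ fun i _ => hmeas i))
    (fun j => measurableSet_le measurable_const (hmeas j)) hAB
    (fun j ω hω => lt_abs_sum_erase_of_le_sum_ite (mul_pos hε hx).le hη1 hx hω.2 hω.1)
    (fun j ω hω => (le_or_gt ((1 - η) * x) (X j ω)).imp id (lt_abs_sum_erase_of_le_sum hω))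
    (fun j ω hω => (mul_le_mul_of_nonneg_right hηε.le hx.le).trans hω)
    (fun j ω hω => (lt_or_ge (X j ω) ((1 + η) * x)).imp (⟨hω.1, ·⟩)
      (lt_abs_sum_erase_of_sum_lt (not_le.1 hω.2)))
  have hpairs := sum_sum_erase_measureReal_inter_le_sq P C hCC
  simp only [hCR] at key
  have hCR_nonneg : 0 ≤ ∑ j, P.real (C j) * P.real (R j) := by positivity
  linarith [sq_nonneg (∑ j, P.real (C j))]

/-- **Lemma (truncation approximation, finite sums).**
For independent random variables `X 1, …, X n`, `x > 0`, `0 < η < 1`, `ε > 0` with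
`1 - η > ε`, the probability `P(S n ≥ x)` is approximated by
`P(S n^{(εx)} ≥ x) + Σ_j P(X j ≥ (1-η)x)` with the stated error bound. -/
theorem truncation_approximation_finite
    {Ω : Type*} [MeasurableSpace Ω] (P : Measure Ω) [IsProbabilityMeasure P]
    (n : ℕ) (X : Fin n → Ω → ℝ)
    (hmeas : ∀ i, Measurable (X i))
    (hindep : iIndepFun X P)
    (x η ε : ℝ) (hx : 0 < x)
    (hη0 : 0 < η) (hη1 : η < 1) (hε : 0 < ε) (hηε : ε < 1 - η) :
    |(P {ω | x ≤ ∑ i, X i ω}).toReal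
      - (P {ω | x ≤ ∑ i, (if X i ω < ε * x then X i ω else 0)}).toReal
      - ∑ j, (P {ω | (1 - η) * x ≤ X j ω}).toReal|
    ≤ 4 * (∑ j, (P {ω | ε * x ≤ X j ω}).toReal) ^ 2
      + 3 * ∑ j, (P {ω | ε * x ≤ X j ω}).toReal
          * (P {ω | η * x < |∑ i ∈ Finset.univ.erase j, X i ω|}).toReal
      + ∑ j, (P {ω | (1 - η) * x ≤ X j ω ∧ X j ω < (1 + η) * x}).toReal :=
  truncation_approximation_finite_general P n X hmeas hindep x η ε hx hη1 hε hηε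
end

section
/- Lemma (truncation approximation, infinite sums). Let 1 − η > ε > 0 and x > 0, and let X_1, X_2, … be independent real random variables such that S = Σ_{i=1}^∞ X_i converges almost surely. Then S^{(εx)} = Σ_{i=1}^∞ X_i^{(εx)} converges almost surely, and |P(S ≥ x) − P(S^{(εx)} ≥ x) − Σ_{j=1}^∞ P(X_j ≥ (1−η)x)| ≤ 4 (Σ_{j=1}^∞ P(X_j ≥ εx))² + 3 Σ_{j=1}^∞ P(X_j ≥ εx) · P(|S(j)| > ηx) + Σ_{j=1}^∞ P((1−η)x ≤ X_j < (1+η)x). -/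
/-!
Split `Ω` according to which of the events `A j = {εx ≤ X j}` occur; `∑ P(A j) < ∞` by the
second Borel–Cantelli lemma, since `X j → 0` almost surely. Where no `A j` occurs, the truncated
and the full sum agree. The event that two of them occur has probability at most `(∑ P(A j))²`
by pairwise independence. Where only `A j` occurs, the truncated sum is `S - X j`, and both
`{x ≤ S}` and `{x ≤ S - X j}` differ from `{(1 - η)x ≤ X j}` only on `A j ∩ {ηx < |S(j)|}`
(whose probability factorizes, `X j` being independent of `S(j)`), on the window
`(1 - η)x ≤ X j < (1 + η)x`, or where `A j` occurs together with another `A k`.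
-/

open MeasureTheory ProbabilityTheory Filter Finset
open scoped ENNReal
open Function

namespace ProbabilityTheory

variable {Ω ι β : Type*} [MeasurableSpace Ω] {μ : Measure Ω}

lemma iIndepFun.iIndepSet_preimage [MeasurableSpace β] {X : ι → Ω → β} (hX : iIndepFun X μ)
    (hXm : ∀ i, Measurable (X i)) {s : ι → Set β} (hs : ∀ i, MeasurableSet (s i)) :
    iIndepSet (fun i => X i ⁻¹' s i) μ :=
  (iIndepSet_iff_meas_biInter fun i => hXm i (hs i)).2 fun t =>
    hX.measure_inter_preimage_eq_mul t fun i _ => hs i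

lemma iIndepSet.measure_inter_eq_mul {s : ι → Set Ω} (h : iIndepSet s μ) {i j : ι}
    (hij : i ≠ j) : μ (s i ∩ s j) = μ (s i) * μ (s j) := by
  classical
  simpa [Finset.prod_pair hij] using h.meas_biInter {i, j}

/-- The second Borel–Cantelli lemma, in contrapositive form. -/
lemma iIndepSet.tsum_measure_ne_top {s : ℕ → Set Ω} (hsm : ∀ n, MeasurableSet (s n))
    (h : iIndepSet s μ) (hfin : ∀ᵐ ω ∂μ, ∀ᶠ n in atTop, ω ∉ s n) : ∑' n, μ (s n) ≠ ∞ := by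
  intro htop
  have hnull : μ (limsup s atTop) = 0 := by
    rw [measure_eq_zero_iff_ae_notMem]
    filter_upwards [hfin] with ω hω hmem
    obtain ⟨n, hns, hn⟩ := ((mem_limsup_iff_frequently_mem.1 hmem).and_eventually hω).exists
    exact hn hns
  simp [measure_limsup_eq_one hsm h htop] at hnull

lemma iIndepFun.indepFun_tsum_sub {X : ℕ → Ω → ℝ} (hX : iIndepFun X μ)
    (hXm : ∀ i, Measurable (X i)) (hsum : ∀ᵐ ω ∂μ, Summable fun i => X i ω) (j : ℕ) :
    IndepFun (X j) (fun ω => ∑' i, X i ω - X j ω) μ := by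
  set m : ℕ → MeasurableSpace Ω := fun k => MeasurableSpace.comap (X k) inferInstance
  have hrest : Measurable[⨆ k ∈ ({j}ᶜ : Set ℕ), m k]
      fun ω => ∑' i, if i = j then 0 else X i ω := by
    let _ : MeasurableSpace Ω := ⨆ k ∈ ({j}ᶜ : Set ℕ), m k
    refine Measurable.tsum fun i => ?_
    by_cases h : i = j
    · simp only [h, if_true]
      exact measurable_const
    · simp only [h, if_false]
      exact Measurable.of_comap_le (le_biSup m (show i ∈ ({j}ᶜ : Set ℕ) from h))
  have hsplit : Indep (m j) (⨆ k ∈ ({j}ᶜ : Set ℕ), m k) μ :=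
    indep_of_indep_of_le_left (indep_iSup_of_disjoint (fun k => (hXm k).comap_le) hX
      disjoint_compl_right) (le_biSup m (Set.mem_singleton j))
  refine ((IndepFun_iff_Indep _ _ _).2
    (indep_of_indep_of_le_right hsplit hrest.comap_le)).congr EventuallyEq.rfl ?_
  filter_upwards [hsum] with ω hω
  rw [hω.tsum_eq_add_tsum_ite j, add_sub_cancel_left]

end ProbabilityTheory

section Occurrence

variable {Ω ι : Type*} (A : ι → Set Ω)

def onlyIn (j : ι) : Set Ω := A j \ ⋃ (k) (_ : k ≠ j), A k

def atLeastTwo : Set Ω := ⋃ (j) (k) (_ : j ≠ k), A j ∩ A k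

variable {A}

lemma pairwise_disjoint_onlyIn : Pairwise (Disjoint on onlyIn A) := fun _ _ hij =>
  Set.disjoint_left.2 fun _ hi hj => hj.2 (Set.mem_biUnion hij hi.1)

lemma iUnion_eq_iUnion_onlyIn_union_atLeastTwo :
    ⋃ i, A i = (⋃ j, onlyIn A j) ∪ atLeastTwo A := by
  ext ω
  simp only [onlyIn, atLeastTwo, Set.mem_iUnion, Set.mem_union, Set.mem_sdiff, Set.mem_inter_iff]
  grind

lemma disjoint_iUnion_onlyIn_atLeastTwo : Disjoint (⋃ j, onlyIn A j) (atLeastTwo A) := by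
  simp only [Set.disjoint_left, onlyIn, atLeastTwo, Set.mem_iUnion, Set.mem_sdiff]
  grind

lemma atLeastTwo_subset_iUnion_diff_onlyIn : atLeastTwo A ⊆ ⋃ j, A j \ onlyIn A j := by
  simp only [Set.subset_def, onlyIn, atLeastTwo, Set.mem_iUnion, Set.mem_sdiff]
  grind

variable [MeasurableSpace Ω] [Countable ι]

lemma MeasurableSet.onlyIn (hA : ∀ i, MeasurableSet (A i)) (j : ι) :
    MeasurableSet (onlyIn A j) :=
  (hA j).diff (.iUnion fun k => .iUnion fun _ => hA k)

lemma MeasurableSet.atLeastTwo (hA : ∀ i, MeasurableSet (A i)) : MeasurableSet (atLeastTwo A) :=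
  .iUnion fun j => .iUnion fun k => .iUnion fun _ => (hA j).inter (hA k)

end Occurrence

section Measure

variable {Ω ι : Type*} [MeasurableSpace Ω] {μ : Measure Ω} {A : ι → Set Ω}

lemma summable_measureReal_of_subset (hfin : ∑' i, μ (A i) ≠ ∞) {s : ι → Set Ω}
    (hs : ∀ i, s i ⊆ A i) : Summable fun i => μ.real (s i) :=
  ENNReal.summable_toReal <|
    ne_top_of_le_ne_top hfin (ENNReal.tsum_le_tsum fun i => measure_mono (hs i))

variable [Countable ι]

lemma measureReal_iUnion [IsFiniteMeasure μ] {s : ι → Set Ω} (hd : Pairwise (Disjoint on s))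
    (hs : ∀ i, MeasurableSet (s i)) : μ.real (⋃ i, s i) = ∑' i, μ.real (s i) := by
  simp only [measureReal_def, measure_iUnion hd hs,
    ENNReal.tsum_toReal_eq fun i => measure_ne_top μ _]

lemma measureReal_eq_diff_add_tsum_onlyIn_add_atLeastTwo [IsFiniteMeasure μ]
    (hA : ∀ i, MeasurableSet (A i)) {C : Set Ω} (hC : MeasurableSet C) :
    μ.real C = μ.real (C \ ⋃ i, A i) + ∑' j, μ.real (C ∩ onlyIn A j)
      + μ.real (C ∩ atLeastTwo A) := by
  have hU : μ.real (C ∩ ⋃ i, A i)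
      = ∑' j, μ.real (C ∩ onlyIn A j) + μ.real (C ∩ atLeastTwo A) := by
    rw [iUnion_eq_iUnion_onlyIn_union_atLeastTwo, Set.inter_union_distrib_left,
      measureReal_union (disjoint_iUnion_onlyIn_atLeastTwo.mono Set.inter_subset_right
        Set.inter_subset_right) (hC.inter (.atLeastTwo hA)), Set.inter_iUnion,
      measureReal_iUnion (fun _ _ hij => (pairwise_disjoint_onlyIn hij).mono
        Set.inter_subset_right Set.inter_subset_right) fun j => hC.inter (.onlyIn hA j)]
  rw [← measureReal_inter_add_sdiff (.iUnion hA), hU]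
  ring

lemma measure_diff_onlyIn_le (hpair : Pairwise fun i j => μ (A i ∩ A j) = μ (A i) * μ (A j))
    (j : ι) : μ (A j \ onlyIn A j) ≤ μ (A j) * ∑' k, μ (A k) := by
  rw [onlyIn, Set.sdiff_sdiff_right_self, Set.inter_iUnion₂, ← ENNReal.tsum_mul_left]
  refine (measure_iUnion_le _).trans (ENNReal.tsum_le_tsum fun k => ?_)
  by_cases hk : k = j
  · simp [hk]
  · simp [hk, hpair (Ne.symm hk)]

lemma tsum_measure_diff_onlyIn_le
    (hpair : Pairwise fun i j => μ (A i ∩ A j) = μ (A i) * μ (A j)) :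
    ∑' j, μ (A j \ onlyIn A j) ≤ (∑' k, μ (A k)) ^ 2 :=
  calc ∑' j, μ (A j \ onlyIn A j) ≤ ∑' j, μ (A j) * ∑' k, μ (A k) :=
        ENNReal.tsum_le_tsum (measure_diff_onlyIn_le hpair)
    _ = (∑' k, μ (A k)) ^ 2 := by rw [ENNReal.tsum_mul_right, sq]

lemma measure_atLeastTwo_le (hpair : Pairwise fun i j => μ (A i ∩ A j) = μ (A i) * μ (A j)) :
    μ (atLeastTwo A) ≤ (∑' k, μ (A k)) ^ 2 :=
  ((measure_mono atLeastTwo_subset_iUnion_diff_onlyIn).trans (measure_iUnion_le _)).trans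
    (tsum_measure_diff_onlyIn_le hpair)

lemma tsum_measureReal_diff_onlyIn_le [IsFiniteMeasure μ]
    (hpair : Pairwise fun i j => μ (A i ∩ A j) = μ (A i) * μ (A j)) (hfin : ∑' i, μ (A i) ≠ ∞) :
    ∑' j, μ.real (A j \ onlyIn A j) ≤ (∑' j, μ.real (A j)) ^ 2 := by
  simp only [measureReal_def, ← ENNReal.tsum_toReal_eq fun _ => measure_ne_top μ _,
    ← ENNReal.toReal_pow]
  exact ENNReal.toReal_mono (by finiteness) (tsum_measure_diff_onlyIn_le hpair)

lemma measureReal_atLeastTwo_le [IsFiniteMeasure μ]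
    (hpair : Pairwise fun i j => μ (A i ∩ A j) = μ (A i) * μ (A j)) (hfin : ∑' i, μ (A i) ≠ ∞) :
    μ.real (atLeastTwo A) ≤ (∑' j, μ.real (A j)) ^ 2 := by
  simp only [measureReal_def, ← ENNReal.tsum_toReal_eq fun _ => measure_ne_top μ _,
    ← ENNReal.toReal_pow]
  exact ENNReal.toReal_mono (by finiteness) (measure_atLeastTwo_le hpair)

lemma abs_measureReal_sub_sub_tsum_le [IsFiniteMeasure μ] (hA : ∀ i, MeasurableSet (A i))
    (hpair : Pairwise fun i j => μ (A i ∩ A j) = μ (A i) * μ (A j)) (hfin : ∑' i, μ (A i) ≠ ∞)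
    {C C' : Set Ω} (hC : MeasurableSet C) (hC' : MeasurableSet C')
    (hCC' : C \ ⋃ i, A i = C' \ ⋃ i, A i) {q e : ι → ℝ} (hq : Summable q) (he : Summable e)
    (h : ∀ j, |μ.real (C ∩ onlyIn A j) - μ.real (C' ∩ onlyIn A j) - q j|
      ≤ e j + μ.real (A j \ onlyIn A j)) :
    |μ.real C - μ.real C' - ∑' j, q j| ≤ ∑' j, e j + 2 * (∑' j, μ.real (A j)) ^ 2 := by
  rw [measureReal_eq_diff_add_tsum_onlyIn_add_atLeastTwo hA hC,
    measureReal_eq_diff_add_tsum_onlyIn_add_atLeastTwo hA hC', hCC']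
  set a := fun j => μ.real (C ∩ onlyIn A j)
  set b := fun j => μ.real (C' ∩ onlyIn A j)
  have ha : Summable a :=
    summable_measureReal_of_subset hfin fun _ => Set.inter_subset_right.trans Set.sdiff_subset
  have hb : Summable b :=
    summable_measureReal_of_subset hfin fun _ => Set.inter_subset_right.trans Set.sdiff_subset
  have hd : Summable fun j => μ.real (A j \ onlyIn A j) :=
    summable_measureReal_of_subset hfin fun _ => Set.sdiff_subset
  have hsingle : |∑' j, (a j - b j - q j)| ≤ ∑' j, e j + (∑' j, μ.real (A j)) ^ 2 :=
    calc |∑' j, (a j - b j - q j)| ≤ ∑' j, (e j + μ.real (A j \ onlyIn A j)) :=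
          tsum_of_norm_bounded (he.add hd).hasSum fun j => (Real.norm_eq_abs _).trans_le (h j)
      _ ≤ _ := by
        rw [he.tsum_add hd]
        gcongr
        exact tsum_measureReal_diff_onlyIn_le hpair hfin
  have htwo_le : ∀ E : Set Ω, μ.real (E ∩ atLeastTwo A) ≤ (∑' j, μ.real (A j)) ^ 2 := fun _ =>
    (measureReal_mono Set.inter_subset_right).trans (measureReal_atLeastTwo_le hpair hfin)
  have htwo : |μ.real (C ∩ atLeastTwo A) - μ.real (C' ∩ atLeastTwo A)|
      ≤ (∑' j, μ.real (A j)) ^ 2 :=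
    abs_sub_le_of_nonneg_of_le measureReal_nonneg (htwo_le C) measureReal_nonneg (htwo_le C')
  calc _ = |∑' j, (a j - b j - q j)
        + (μ.real (C ∩ atLeastTwo A) - μ.real (C' ∩ atLeastTwo A))| := by
        rw [(ha.sub hb).tsum_sub hq, ha.tsum_sub hb]; ring_nf
    _ ≤ _ := (abs_add_le _ _).trans (by linarith)

end Measure

section Truncation

variable {ι : Type*} {f : ι → ℝ} {c : ℝ}

lemma Summable.ite_lt (hf : Summable f) (hc : 0 < c) :
    Summable fun i => if f i < c then f i else 0 :=
  hf.congr_cofinite <| (hf.tendsto_cofinite_zero.eventually (gt_mem_nhds hc)).mono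
    fun _ hi => (if_pos hi).symm

lemma Summable.tsum_ite_lt_eq_sub [DecidableEq ι] (hf : Summable f) {j : ι} (hj : c ≤ f j)
    (hk : ∀ k ≠ j, f k < c) : ∑' i, (if f i < c then f i else 0) = ∑' i, f i - f j := by
  rw [hf.tsum_eq_add_tsum_ite j, add_sub_cancel_left]
  exact tsum_congr fun i => by by_cases hi : i = j <;> simp [hi, hj.not_gt, hk]

end Truncation

section SingleJump

variable {Ω : Type*} [MeasurableSpace Ω] {μ : Measure Ω} [IsFiniteMeasure μ]

lemma abs_measureReal_sub_sub_le_of_single_jump {S T Y : Ω → ℝ} {A B : Set Ω} {x η : ℝ}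
    (hx : 0 < x) (hη : η < 1) (hBA : B ⊆ A) (hYA : {ω | (1 - η) * x ≤ Y ω} ⊆ A)
    (hT : ∀ᵐ ω ∂μ, ω ∈ B → T ω = S ω - Y ω) :
    |μ.real ({ω | x ≤ S ω} ∩ B) - μ.real ({ω | x ≤ T ω} ∩ B)
        - μ.real {ω | (1 - η) * x ≤ Y ω}|
      ≤ 2 * μ.real (A ∩ {ω | η * x < |S ω - Y ω|})
        + μ.real {ω | (1 - η) * x ≤ Y ω ∧ Y ω < (1 + η) * x} + μ.real (A \ B) := by
  set D := A ∩ {ω | η * x < |S ω - Y ω|}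
  set Q := {ω | (1 - η) * x ≤ Y ω}
  set R := {ω | (1 - η) * x ≤ Y ω ∧ Y ω < (1 + η) * x}
  set P := {ω | x ≤ S ω} ∩ B
  have hT_le : μ.real ({ω | x ≤ T ω} ∩ B) ≤ μ.real D := by
    refine ENNReal.toReal_mono (measure_ne_top _ _) (measure_mono_ae ?_)
    filter_upwards [hT] with ω hω ⟨hxT, hB⟩
    refine ⟨hBA hB, ?_⟩
    have hxT : x ≤ S ω - Y ω := (hω hB) ▸ hxT
    show η * x < |S ω - Y ω|
    nlinarith [le_abs_self (S ω - Y ω)]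
  have hS_le : μ.real P ≤ μ.real Q + μ.real D := by
    refine (measureReal_mono (s₂ := Q ∪ D) ?_).trans (measureReal_union_le Q D)
    rintro ω ⟨hxS, hB⟩
    by_cases hd : η * x < |S ω - Y ω|
    · exact Or.inr ⟨hBA hB, hd⟩
    · refine Or.inl ?_
      show (1 - η) * x ≤ Y ω
      linarith [hxS.out, le_abs_self (S ω - Y ω)]
  have hQ_le : μ.real Q ≤ μ.real P + μ.real R + μ.real D + μ.real (A \ B) := by
    have hQ_sub : Q ⊆ P ∪ R ∪ D ∪ A \ B := by
      intro ω hQ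
      by_cases hB : ω ∈ B
      · by_cases hd : η * x < |S ω - Y ω|
        · exact Or.inl (Or.inr ⟨hYA hQ, hd⟩)
        · by_cases hxS : x ≤ S ω
          · exact Or.inl (Or.inl (Or.inl ⟨hxS, hB⟩))
          · refine Or.inl (Or.inl (Or.inr ⟨hQ, ?_⟩))
            linarith [neg_abs_le (S ω - Y ω)]
      · exact Or.inr ⟨hYA hQ, hB⟩
    linarith [measureReal_mono (μ := μ) hQ_sub,
      measureReal_union_le (μ := μ) (P ∪ R ∪ D) (A \ B),
      measureReal_union_le (μ := μ) (P ∪ R) D, measureReal_union_le (μ := μ) P R]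
  rw [abs_le]
  constructor <;> linarith [measureReal_nonneg (μ := μ) (s := {ω | x ≤ T ω} ∩ B),
    measureReal_nonneg (μ := μ) (s := D), measureReal_nonneg (μ := μ) (s := R),
    measureReal_nonneg (μ := μ) (s := A \ B)]

end SingleJump

section Estimate

variable {Ω : Type*} [MeasurableSpace Ω] {P : Measure Ω} [IsFiniteMeasure P]
  {X : ℕ → Ω → ℝ}

theorem abs_measureReal_tsum_ge_sub_tsum_ite_ge_sub_le (hXm : ∀ i, Measurable (X i))
    (hX : iIndepFun X P) (hsum : ∀ᵐ ω ∂P, Summable fun i => X i ω) {c x η : ℝ} (hc : 0 < c)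
    (hx : 0 < x) (hη : η < 1) (hcx : c ≤ (1 - η) * x) :
    |P.real {ω | x ≤ ∑' i, X i ω}
      - P.real {ω | x ≤ ∑' i, if X i ω < c then X i ω else 0}
      - ∑' j, P.real {ω | (1 - η) * x ≤ X j ω}|
    ≤ 2 * (∑' j, P.real {ω | c ≤ X j ω}) ^ 2
      + 2 * ∑' j, P.real {ω | c ≤ X j ω} * P.real {ω | η * x < |∑' i, X i ω - X j ω|}
      + ∑' j, P.real {ω | (1 - η) * x ≤ X j ω ∧ X j ω < (1 + η) * x} := by
  set A : ℕ → Set Ω := fun j => {ω | c ≤ X j ω}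
  set D : ℕ → Set Ω := fun j => {ω | η * x < |∑' i, X i ω - X j ω|}
  set R : ℕ → Set Ω := fun j => {ω | (1 - η) * x ≤ X j ω ∧ X j ω < (1 + η) * x}
  have hA : ∀ j, MeasurableSet (A j) := fun j => measurableSet_le measurable_const (hXm j)
  have hAind : iIndepSet A P := hX.iIndepSet_preimage hXm fun _ => measurableSet_Ici
  have hfin : ∑' j, P (A j) ≠ ∞ := hAind.tsum_measure_ne_top hA <| by
    filter_upwards [hsum] with ω hω
    exact (hω.tendsto_atTop_zero.eventually (gt_mem_nhds hc)).mono fun _ => not_le.2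
  have hAD : ∀ j, P.real (A j ∩ D j) = P.real (A j) * P.real (D j) := fun j => by
    simp only [measureReal_def, ← ENNReal.toReal_mul]
    congr 1
    exact (hX.indepFun_tsum_sub hXm hsum j).measure_inter_preimage_eq_mul _ _
      measurableSet_Ici (measurableSet_lt measurable_const continuous_abs.measurable)
  have hQA : ∀ j, {ω | (1 - η) * x ≤ X j ω} ⊆ A j := fun j ω hω => hcx.trans hω
  have hC'C : {ω | x ≤ ∑' i, X i ω} \ ⋃ i, A i
      = {ω | x ≤ ∑' i, if X i ω < c then X i ω else 0} \ ⋃ i, A i := by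
    ext ω
    simp only [Set.mem_sdiff, Set.mem_iUnion, not_exists]
    exact and_congr_left fun h => show x ≤ _ ↔ x ≤ _ by
      rw [tsum_congr fun i => if_pos (not_le.1 (h i))]
  have hjump : ∀ j, ∀ᵐ ω ∂P, ω ∈ onlyIn A j →
      (∑' i, if X i ω < c then X i ω else 0) = ∑' i, X i ω - X j ω := fun j => by
    filter_upwards [hsum] with ω hω ⟨hj, hk⟩
    exact hω.tsum_ite_lt_eq_sub hj fun k hkj => not_le.1 fun h => hk (Set.mem_biUnion hkj h)
  have hsingle : ∀ j, |P.real ({ω | x ≤ ∑' i, X i ω} ∩ onlyIn A j)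
      - P.real ({ω | x ≤ ∑' i, if X i ω < c then X i ω else 0} ∩ onlyIn A j)
      - P.real {ω | (1 - η) * x ≤ X j ω}|
      ≤ 2 * P.real (A j ∩ D j) + P.real (R j) + P.real (A j \ onlyIn A j) := fun j =>
    abs_measureReal_sub_sub_le_of_single_jump hx hη Set.sdiff_subset (hQA j) (hjump j)
  have hC : MeasurableSet {ω | x ≤ ∑' i, X i ω} :=
    measurableSet_le measurable_const (Measurable.tsum hXm)
  have hC' : MeasurableSet {ω | x ≤ ∑' i, if X i ω < c then X i ω else 0} :=
    measurableSet_le measurable_const <| Measurable.tsum fun i =>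
      Measurable.ite (measurableSet_lt (hXm i) measurable_const) (hXm i) measurable_const
  have hq : Summable fun j => P.real {ω | (1 - η) * x ≤ X j ω} :=
    summable_measureReal_of_subset hfin hQA
  have hAD_sum : Summable fun j => 2 * P.real (A j ∩ D j) :=
    (summable_measureReal_of_subset hfin fun _ => Set.inter_subset_left).mul_left 2
  have hR_sum : Summable fun j => P.real (R j) :=
    summable_measureReal_of_subset hfin fun j => (Set.sep_subset _ _).trans (hQA j)
  have key := abs_measureReal_sub_sub_tsum_le hA (fun _ _ hij => hAind.measure_inter_eq_mul hij)
    hfin hC hC' hC'C hq (hAD_sum.add hR_sum) hsingle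
  rw [hAD_sum.tsum_add hR_sum, tsum_mul_left] at key
  simp only [hAD] at key
  linarith

end Estimate

theorem truncation_approximation_infinite_general
    {Ω : Type*} [MeasurableSpace Ω] (P : Measure Ω) [IsProbabilityMeasure P]
    (X : ℕ → Ω → ℝ)
    (hmeas : ∀ i, Measurable (X i))
    (hindep : iIndepFun X P)
    (hsum : ∀ᵐ ω ∂P, Summable (fun i => X i ω))
    (x η ε : ℝ) (hx : 0 < x)
    (hε : 0 < ε) (hηε : ε < 1 - η) :
    (∀ᵐ ω ∂P, Summable (fun i => if X i ω < ε * x then X i ω else 0)) ∧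
    |(P {ω | x ≤ ∑' i, X i ω}).toReal
      - (P {ω | x ≤ ∑' i, (if X i ω < ε * x then X i ω else 0)}).toReal
      - ∑' j, (P {ω | (1 - η) * x ≤ X j ω}).toReal|
    ≤ 4 * (∑' j, (P {ω | ε * x ≤ X j ω}).toReal) ^ 2
      + 3 * ∑' j, (P {ω | ε * x ≤ X j ω}).toReal
          * (P {ω | η * x < |(∑' i, X i ω) - X j ω|}).toReal
      + ∑' j, (P {ω | (1 - η) * x ≤ X j ω ∧ X j ω < (1 + η) * x}).toReal := by
  have hεx : 0 < ε * x := mul_pos hε hx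
  refine ⟨hsum.mono fun ω hω => hω.ite_lt hεx, ?_⟩
  have h := abs_measureReal_tsum_ge_sub_tsum_ite_ge_sub_le hmeas hindep hsum hεx hx
    (by linarith) (mul_le_mul_of_nonneg_right hηε.le hx.le)
  have hpd : 0 ≤ ∑' j, P.real {ω | ε * x ≤ X j ω}
      * P.real {ω | η * x < |∑' i, X i ω - X j ω|} :=
    tsum_nonneg fun _ => mul_nonneg measureReal_nonneg measureReal_nonneg
  simp only [measureReal_def] at h hpd
  linarith [sq_nonneg (∑' j, (P {ω | ε * x ≤ X j ω}).toReal)]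

/-- **Lemma (truncation approximation, infinite sums).**
For independent random variables `X 0, X 1, …` whose sum `S = Σ_i X i` converges
almost surely, with `1 - η > ε > 0` and `x > 0`, the truncated sum
`S^{(εx)} = Σ_i X i 1{X i < εx}` also converges almost surely and the truncation
approximation inequality holds. -/
theorem truncation_approximation_infinite
    {Ω : Type*} [MeasurableSpace Ω] (P : Measure Ω) [IsProbabilityMeasure P]
    (X : ℕ → Ω → ℝ)
    (hmeas : ∀ i, Measurable (X i))
    (hindep : iIndepFun X P)
    (hsum : ∀ᵐ ω ∂P, Summable (fun i => X i ω))
    (x η ε : ℝ) (hx : 0 < x)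
    (hη0 : 0 < η) (hη1 : η < 1) (hε : 0 < ε) (hηε : ε < 1 - η) :
    (∀ᵐ ω ∂P, Summable (fun i => if X i ω < ε * x then X i ω else 0)) ∧
    |(P {ω | x ≤ ∑' i, X i ω}).toReal
      - (P {ω | x ≤ ∑' i, (if X i ω < ε * x then X i ω else 0)}).toReal
      - ∑' j, (P {ω | (1 - η) * x ≤ X j ω}).toReal|
    ≤ 4 * (∑' j, (P {ω | ε * x ≤ X j ω}).toReal) ^ 2
      + 3 * ∑' j, (P {ω | ε * x ≤ X j ω}).toReal
          * (P {ω | η * x < |(∑' i, X i ω) - X j ω|}).toReal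
      + ∑' j, (P {ω | (1 - η) * x ≤ X j ω ∧ X j ω < (1 + η) * x}).toReal :=
  truncation_approximation_infinite_general P X hmeas hindep hsum x η ε hx hε hηε
end
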